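/- Let c = (c_1,…,c_k) be a composition of size n = c_1+⋯+c_k with k ≥ 2, and let 1 ≤ m ≤ k−1. Then for every real q, g_{c^m}(q) = ((c_1+⋯+c_m)/n)·g_{c^R}(q) + ((c_{m+1}+⋯+c_k)/n)·q^{c_1}·g_{c^L}(q). -/

import Mathlib

open MeasureTheory

/-- Iterated integral defining the composition polynomial, peeling off the
outermost variable first (so the list argument is the reversed composition). -/
noncomputable def gAux : List ℕ → ℝ → ℝ → ℝ
  | [], _, _ => 1
  | a :: rest, q, u => ∫ t in q..u, t ^ (a - 1) * gAux rest q t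

/-- The composition polynomial
`g_c(q) = ∫_q^1 ∫_q^{t_k} ⋯ ∫_q^{t_2} t_1^{c_1-1} ⋯ t_k^{c_k-1} dt_1 ⋯ dt_k`. -/
noncomputable def gcomp (c : List ℕ) (q : ℝ) : ℝ := gAux c.reverse q 1

/-!
Write `G_c(x)` for the iterated integral defining `g_c` with the outermost upper limit `1`
replaced by `x`. Differentiating `x ^ c_k * G_{c^R}(x)` and integrating from `q` gives, by
induction on `k`, `n · G_c(x) = x ^ c_k · G_{c^R}(x) - q ^ c_1 · G_{c^L}(x)`. At `x = 1` this
reads `n · g_c = g_{c^R} - q ^ c_1 · g_{c^L}`. Applied to `(c_1, …, c_m)` inside the integral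
over the merged variable, it gives `g_{c^m} = (c_1 + ⋯ + c_m) · g_c + q ^ c_1 · g_{c^L}`;
eliminating `g_c` between the two identities yields the recursion.
-/

theorem continuous_gAux (L : List ℕ) (q : ℝ) : Continuous (gAux L q) := by
  induction L with
  | nil => exact continuous_const
  | cons a L ih =>
    exact intervalIntegral.continuous_primitive
      (fun _ _ => ((continuous_pow _).mul ih).intervalIntegrable _ _) q

-- The composition `c` is in natural order, innermost part first.
noncomputable def gcompUpTo (c : List ℕ) (q x : ℝ) : ℝ := gAux c.reverse q x

theorem gcomp_eq_gcompUpTo (c : List ℕ) (q : ℝ) : gcomp c q = gcompUpTo c q 1 := rfl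

section gcompUpTo

variable {q : ℝ}

theorem gcompUpTo_nil (x : ℝ) : gcompUpTo [] q x = 1 := rfl

theorem gcompUpTo_concat (c : List ℕ) (a : ℕ) (x : ℝ) :
    gcompUpTo (c ++ [a]) q x = ∫ t in q..x, t ^ (a - 1) * gcompUpTo c q t := by
  simp [gcompUpTo, gAux]

theorem continuous_gcompUpTo (c : List ℕ) : Continuous (gcompUpTo c q) :=
  continuous_gAux _ q

theorem hasDerivAt_gcompUpTo_concat (c : List ℕ) (a : ℕ) (x : ℝ) :
    HasDerivAt (gcompUpTo (c ++ [a]) q) (x ^ (a - 1) * gcompUpTo c q x) x := by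
  simp only [funext (gcompUpTo_concat c a)]
  exact (((continuous_pow _).mul (continuous_gcompUpTo c)).integral_hasStrictDerivAt
    q x).hasDerivAt

theorem gcompUpTo_self {c : List ℕ} (hc : c ≠ []) : gcompUpTo c q q = 0 := by
  obtain ⟨L, a, rfl⟩ := List.eq_nil_or_concat' c |>.resolve_left hc
  rw [gcompUpTo_concat, intervalIntegral.integral_same]

theorem integral_pow_mul_linear (k : ℕ) {f g : ℝ → ℝ} (hf : Continuous f)
    (hg : Continuous g) (α β x : ℝ) :
    ∫ t in q..x, t ^ k * (α * f t + β * g t) =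
      α * (∫ t in q..x, t ^ k * f t) + β * ∫ t in q..x, t ^ k * g t := by
  simp only [mul_add, mul_left_comm _ α, mul_left_comm _ β]
  rw [intervalIntegral.integral_add
      ((by fun_prop : Continuous fun t => α * (t ^ k * f t)).intervalIntegrable _ _)
      ((by fun_prop : Continuous fun t => β * (t ^ k * g t)).intervalIntegrable _ _),
    intervalIntegral.integral_const_mul, intervalIntegral.integral_const_mul]

theorem gcompUpTo_append_linear {M M₁ M₂ : List ℕ} {α β : ℝ}
    (h : ∀ t, gcompUpTo M q t = α * gcompUpTo M₁ q t + β * gcompUpTo M₂ q t) (v : List ℕ)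
    (x : ℝ) :
    gcompUpTo (M ++ v) q x = α * gcompUpTo (M₁ ++ v) q x + β * gcompUpTo (M₂ ++ v) q x := by
  induction v using List.reverseRecOn generalizing x with
  | nil => simpa using h x
  | append_singleton v d ih =>
    simp only [← List.append_assoc, gcompUpTo_concat, ih]
    exact integral_pow_mul_linear _ (continuous_gcompUpTo _) (continuous_gcompUpTo _) α β x

theorem sum_mul_gcompUpTo {c : List ℕ} (hpos : ∀ y ∈ c, 0 < y) (hc : c ≠ []) (x : ℝ) :
    (c.sum : ℝ) * gcompUpTo c q x =
      x ^ c.getLast hc * gcompUpTo c.dropLast q x - q ^ c.headI * gcompUpTo c.tail q x := by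
  induction c using List.reverseRecOn generalizing x with
  | nil => exact absurd rfl hc
  | append_singleton L a ih =>
    obtain ⟨a, rfl⟩ := Nat.exists_eq_add_one.2 (hpos a (by simp))
    simp only [List.getLast_append_singleton, List.dropLast_concat]
    rcases eq_or_ne L [] with rfl | hL
    · rw [gcompUpTo_concat]
      simp only [List.nil_append, gcompUpTo_nil, mul_one, integral_pow, List.sum_singleton,
        List.headI_cons, List.tail_cons]
      push_cast
      field_simp
    obtain ⟨b, hb⟩ := Nat.exists_eq_add_one.2 (hpos (L.getLast hL) (by simp))
    have hrec := ih (fun y hy => hpos y (by simp [hy])) hL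
    simp only [hb] at hrec
    have hderiv : ∀ t ∈ Set.uIcc q x, HasDerivAt (fun s => s ^ (a + 1) * gcompUpTo L q s)
        (t ^ a * (((L.sum + (a + 1) : ℕ) : ℝ) * gcompUpTo L q t +
          q ^ L.headI * gcompUpTo L.tail q t)) t := by
      intro t _
      have hL' := hasDerivAt_gcompUpTo_concat (q := q) L.dropLast (L.getLast hL) t
      rw [List.dropLast_append_getLast hL, hb] at hL'
      refine ((hasDerivAt_pow (a + 1) t).mul hL').congr_deriv ?_
      simp only [Nat.cast_add, Nat.cast_one, Nat.add_sub_cancel]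
      linear_combination -t ^ a * hrec t
    have hint := intervalIntegral.integral_eq_sub_of_hasDerivAt hderiv
      (((continuous_pow a).mul ((continuous_const.mul (continuous_gcompUpTo L)).add
        (continuous_const.mul (continuous_gcompUpTo _)))).intervalIntegrable q x)
    rw [integral_pow_mul_linear _ (continuous_gcompUpTo _) (continuous_gcompUpTo _),
      gcompUpTo_self hL, mul_zero, sub_zero] at hint
    have hhead : (L ++ [a + 1]).headI = L.headI := by
      obtain ⟨l, L, rfl⟩ := List.exists_cons_of_ne_nil hL; rfl
    rw [hhead, List.tail_append_of_ne_nil hL, gcompUpTo_concat, gcompUpTo_concat,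
      List.sum_append, List.sum_singleton, Nat.add_sub_cancel, ← hint]
    ring

theorem gcompUpTo_merge_last {u : List ℕ} {a b : ℕ} (hu : ∀ y ∈ u, 0 < y) (ha : 0 < a)
    (hb : 0 < b) (x : ℝ) :
    gcompUpTo (u ++ [a + b]) q x = ((u.sum + a : ℕ) : ℝ) * gcompUpTo (u ++ [a, b]) q x +
      q ^ (u ++ [a]).headI * gcompUpTo ((u ++ [a]).tail ++ [b]) q x := by
  have hsplit : ∀ t, t ^ a * gcompUpTo u q t =
      ((u.sum + a : ℕ) : ℝ) * gcompUpTo (u ++ [a]) q t +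
        q ^ (u ++ [a]).headI * gcompUpTo (u ++ [a]).tail q t := by
    intro t
    have h := sum_mul_gcompUpTo (q := q) (c := u ++ [a])
      (fun y hy => (List.mem_append.1 hy).elim (hu y) (by simp_all)) (by simp) t
    rw [List.getLast_append_singleton, List.dropLast_concat, List.sum_append,
      List.sum_singleton] at h
    linarith
  obtain ⟨b, rfl⟩ := Nat.exists_eq_add_one.2 hb
  rw [show u ++ [a, b + 1] = u ++ [a] ++ [b + 1] by simp, gcompUpTo_concat, gcompUpTo_concat,
    gcompUpTo_concat, ← integral_pow_mul_linear _ (continuous_gcompUpTo _)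
      (continuous_gcompUpTo _)]
  refine intervalIntegral.integral_congr fun t _ => ?_
  simp only [Nat.add_sub_cancel, ← hsplit]
  rw [show a + (b + 1) - 1 = b + a by omega, pow_add, mul_assoc]

theorem gcompUpTo_merge {u v : List ℕ} {a b : ℕ} (hpos : ∀ y ∈ u ++ a :: b :: v, 0 < y)
    (x : ℝ) :
    gcompUpTo (u ++ (a + b) :: v) q x =
      ((u.sum + a : ℕ) : ℝ) * gcompUpTo (u ++ a :: b :: v) q x +
        q ^ (u ++ a :: b :: v).headI * gcompUpTo (u ++ a :: b :: v).tail q x := by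
  have h := gcompUpTo_append_linear
    (gcompUpTo_merge_last (q := q) (u := u) (fun y hy => hpos y (by simp [hy]))
      (hpos a (by simp)) (hpos b (by simp))) v x
  cases u <;> simpa using h

end gcompUpTo

/-- Theorem: for a composition `c = u ++ a :: b :: v` of size `n` (with `k ≥ 2`
parts, merging at position `m = |u| + 1`, so `c^m = u ++ (a+b) :: v`,
`β_m = u.sum + a`, and `n − β_m = b + v.sum`):
`g_{c^m}(q) = (β_m/n)·g_{c^R}(q) + ((n−β_m)/n)·q^{c_1}·g_{c^L}(q)`. -/
theorem merged_composition_recursion (u : List ℕ) (a b : ℕ) (v : List ℕ)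
    (hpos : ∀ x ∈ u ++ a :: b :: v, 0 < x) (q : ℝ) :
    gcomp (u ++ (a + b) :: v) q =
      (((u.sum + a : ℕ) : ℝ) / (((u ++ a :: b :: v).sum : ℕ) : ℝ)) *
          gcomp (u ++ a :: b :: v).dropLast q +
        (((b + v.sum : ℕ) : ℝ) / (((u ++ a :: b :: v).sum : ℕ) : ℝ)) *
          (q ^ (u ++ a :: b :: v).headI * gcomp (u ++ a :: b :: v).tail q) := by
  have hsum : (((u ++ a :: b :: v).sum : ℕ) : ℝ) =
      ((u.sum + a : ℕ) : ℝ) + ((b + v.sum : ℕ) : ℝ) := by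
    push_cast [List.sum_append, List.sum_cons]; ring
  have hn : ((u.sum + a : ℕ) : ℝ) + ((b + v.sum : ℕ) : ℝ) ≠ 0 := by
    have ha : 0 < a := hpos a (by simp)
    positivity
  have hsplit := sum_mul_gcompUpTo hpos (by simp) (1 : ℝ) (q := q)
  have hmerge := gcompUpTo_merge hpos (1 : ℝ) (q := q)
  rw [one_pow, one_mul, hsum] at hsplit
  rw [gcomp_eq_gcompUpTo, gcomp_eq_gcompUpTo, gcomp_eq_gcompUpTo, hsum, hmerge]
  field_simp
  linear_combination ((u.sum + a : ℕ) : ℝ) * hsplit
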